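/- Let ⟨id_n⟩ denote the equivalence class of the identity permutation 1 2 ⋯ n under the relation ∼ on S_n, and let ⟨id̄_n⟩ denote the class of its reverse n ⋯ 2 1. Then #⟨id_n⟩ = #⟨id̄_n⟩ = F_{n+1}, the (n+1)-st Fibonacci number. -/

import Mathlib

/-!
The words equivalent to `k (k+1) ⋯ (k+n-1)` are exactly the words cut into blocks `[j]` and
`[j+1, j]` with the values increasing from block to block: such words are closed under the swap
of adjacent entries differing by one (inside a block `[j+1, j]` the only possible swap undoes it,
and neither of its entries can cross into a neighbouring block), and each of them is reached by
swapping the pairs one at a time. A word of length `n + 2` starts with a block of length one or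
two, so these words are counted by the Fibonacci recursion. Reversal of words commutes with `∼`,
which gives the class of the reversed identity.
-/

/-- One interchange of two adjacent entries of a word whose values differ by exactly 1. -/
def AdjSwap1 (u v : List ℕ) : Prop :=
  ∃ (p q : List ℕ) (x y : ℕ), ((x : ℤ) - (y : ℤ)).natAbs = 1 ∧
    u = p ++ x :: y :: q ∧ v = p ++ y :: x :: q

namespace Relation.EqvGen

variable {α β : Type*} {r : α → α → Prop} {a b : α}

theorem map {s : β → β → Prop} (f : α → β) (hf : ∀ a b, r a b → s (f a) (f b))
    (h : EqvGen r a b) : EqvGen s (f a) (f b) :=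
  Setoid.eqvGen_le (s := (EqvGen.setoid s).comap f) (fun a b hab => .rel _ _ (hf a b hab)) h

theorem apply_eq {f : α → β} (hf : ∀ a b, r a b → f a = f b) (h : EqvGen r a b) :
    f a = f b :=
  Setoid.eqvGen_le (s := Setoid.ker f) hf h

end Relation.EqvGen

namespace AdjSwap1

variable {u v : List ℕ}

theorem symm (h : AdjSwap1 u v) : AdjSwap1 v u := by
  obtain ⟨p, q, x, y, hxy, rfl, rfl⟩ := h
  exact ⟨p, q, y, x, by omega, rfl, rfl⟩

theorem cons (a : ℕ) (h : AdjSwap1 u v) : AdjSwap1 (a :: u) (a :: v) := by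
  obtain ⟨p, q, x, y, hxy, rfl, rfl⟩ := h
  exact ⟨a :: p, q, x, y, hxy, rfl, rfl⟩

theorem reverse (h : AdjSwap1 u v) : AdjSwap1 u.reverse v.reverse := by
  obtain ⟨p, q, x, y, hxy, rfl, rfl⟩ := h
  exact ⟨q.reverse, p.reverse, y, x, by omega, by simp, by simp⟩

theorem length_eq (h : AdjSwap1 u v) : u.length = v.length := by
  obtain ⟨p, q, x, y, -, rfl, rfl⟩ := h
  simp

theorem of_cons {a : ℕ} (h : AdjSwap1 (a :: u) v) :
    (∃ v', AdjSwap1 u v' ∧ v = a :: v') ∨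
      ∃ b t, u = b :: t ∧ ((a : ℤ) - b).natAbs = 1 ∧ v = b :: a :: t := by
  obtain ⟨p, q, x, y, hxy, hu, rfl⟩ := h
  cases p with
  | nil =>
    obtain ⟨rfl, rfl⟩ := List.cons_eq_cons.mp hu
    exact .inr ⟨y, q, rfl, hxy, rfl⟩
  | cons c p =>
    obtain ⟨rfl, rfl⟩ := List.cons_eq_cons.mp hu
    exact .inl ⟨p ++ y :: x :: q, ⟨p, q, x, y, hxy, rfl, rfl⟩, rfl⟩

end AdjSwap1

inductive IsBlockWord : ℕ → List ℕ → Prop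
  | nil (k : ℕ) : IsBlockWord k []
  | single (k : ℕ) {w : List ℕ} : IsBlockWord (k + 1) w → IsBlockWord k (k :: w)
  | pair (k : ℕ) {w : List ℕ} : IsBlockWord (k + 2) w → IsBlockWord k ((k + 1) :: k :: w)

namespace IsBlockWord

theorem head_eq_or_eq_succ {k b : ℕ} {t : List ℕ} (h : IsBlockWord k (b :: t)) :
    b = k ∨ b = k + 1 := by
  cases h <;> omega

theorem adjSwap1 {k : ℕ} {u v : List ℕ} (hu : IsBlockWord k u) (h : AdjSwap1 u v) :
    IsBlockWord k v := by
  induction hu generalizing v with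
  | nil k =>
    obtain ⟨p, q, x, y, -, hu, -⟩ := h
    simp at hu
  | single k hw ih =>
    rcases h.of_cons with ⟨v', hv', rfl⟩ | ⟨b, t, rfl, hkb, rfl⟩
    · exact .single k (ih hv')
    · have := hw.head_eq_or_eq_succ
      obtain rfl : b = k + 1 := by omega
      cases hw with
      | single _ ht => exact .pair k ht
  | pair k hw ih =>
    rcases h.of_cons with ⟨v', hv', rfl⟩ | ⟨b, t, ⟨rfl, rfl⟩, -, rfl⟩
    · rcases hv'.of_cons with ⟨v'', hv'', rfl⟩ | ⟨b, t, rfl, hkb, rfl⟩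
      · exact .pair k (ih hv'')
      · have := hw.head_eq_or_eq_succ
        omega
    · exact .single k (.single (k + 1) hw)

theorem range' (k n : ℕ) : IsBlockWord k (List.range' k n) := by
  induction n generalizing k with
  | zero => exact .nil k
  | succ n ih => exact .single k (ih (k + 1))

theorem eqvGen_range' {k : ℕ} {w : List ℕ} (h : IsBlockWord k w) :
    Relation.EqvGen AdjSwap1 (List.range' k w.length) w := by
  induction h with
  | nil k => exact .refl _
  | single k _ ih => exact ih.map (k :: ·) fun _ _ h => h.cons k
  | @pair k w _ ih =>
    have swap : AdjSwap1 (k :: (k + 1) :: w) ((k + 1) :: k :: w) :=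
      ⟨[], w, k, k + 1, by omega, rfl, rfl⟩
    exact .trans _ _ _ (ih.map (k :: (k + 1) :: ·) fun _ _ h => (h.cons (k + 1)).cons k)
      (.rel _ _ swap)

end IsBlockWord

theorem Relation.EqvGen.isBlockWord_iff {k : ℕ} {u v : List ℕ}
    (h : Relation.EqvGen AdjSwap1 u v) : IsBlockWord k u ↔ IsBlockWord k v :=
  (h.apply_eq fun _ _ huv => propext ⟨(·.adjSwap1 huv), (·.adjSwap1 huv.symm)⟩).to_iff

def blockWords : ℕ → ℕ → Finset (List ℕ)
  | _, 0 => {[]}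
  | k, 1 => {[k]}
  | k, n + 2 =>
      (blockWords (k + 1) (n + 1)).map ⟨(k :: ·), List.cons_injective⟩ ∪
        (blockWords (k + 2) n).map
          ⟨((k + 1) :: k :: ·), List.cons_injective.comp List.cons_injective⟩

theorem mem_blockWords {k n : ℕ} {w : List ℕ} :
    w ∈ blockWords k n ↔ IsBlockWord k w ∧ w.length = n := by
  induction k, n using blockWords.induct generalizing w with
  | case1 k =>
    rw [blockWords, Finset.mem_singleton, List.length_eq_zero_iff]
    exact ⟨fun h => ⟨h ▸ .nil k, h⟩, And.right⟩
  | case2 k =>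
    rw [blockWords, Finset.mem_singleton]
    constructor
    · rintro rfl
      exact ⟨.single k (.nil _), rfl⟩
    · rintro ⟨hw, hlen⟩
      cases hw with
      | nil => simp at hlen
      | single _ hw => simpa using hlen
      | pair => simp at hlen
  | case3 k n ih1 ih2 =>
    simp only [blockWords, Finset.mem_union, Finset.mem_map, Function.Embedding.coeFn_mk, ih1, ih2]
    constructor
    · rintro (⟨u, ⟨hu, hlen⟩, rfl⟩ | ⟨u, ⟨hu, hlen⟩, rfl⟩)
      · exact ⟨.single k hu, by simp [hlen]⟩
      · exact ⟨.pair k hu, by simp [hlen]⟩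
    · rintro ⟨hw, hlen⟩
      cases hw with
      | nil => simp at hlen
      | single _ hw => exact .inl ⟨_, ⟨hw, by simpa using hlen⟩, rfl⟩
      | pair _ hw => exact .inr ⟨_, ⟨hw, by simpa using hlen⟩, rfl⟩

theorem card_blockWords (k n : ℕ) : (blockWords k n).card = Nat.fib (n + 1) := by
  induction k, n using blockWords.induct with
  | case1 k => rfl
  | case2 k => rfl
  | case3 k n ih1 ih2 =>
    rw [blockWords, Finset.card_union_of_disjoint, Finset.card_map, Finset.card_map, ih1, ih2,
      add_comm]
    · exact (Nat.fib_add_two (n := n + 1)).symm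
    rw [Finset.disjoint_left]
    rintro _ hu hv
    obtain ⟨u, -, rfl⟩ := Finset.mem_map.mp hu
    obtain ⟨v, -, h⟩ := Finset.mem_map.mp hv
    simp at h

theorem setOf_eqvGen_range'_eq (k n : ℕ) :
    {v | Relation.EqvGen AdjSwap1 (List.range' k n) v} = blockWords k n := by
  ext v
  rw [Set.mem_ofPred_eq, Finset.mem_coe, mem_blockWords]
  constructor
  · intro h
    have hlen := h.apply_eq fun _ _ h => h.length_eq
    exact ⟨h.isBlockWord_iff.mp (.range' k n), by simpa using hlen.symm⟩
  · rintro ⟨hv, rfl⟩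
    exact hv.eqvGen_range'

theorem ncard_setOf_eqvGen_range' (k n : ℕ) :
    {v | Relation.EqvGen AdjSwap1 (List.range' k n) v}.ncard = Nat.fib (n + 1) := by
  rw [setOf_eqvGen_range'_eq, Set.ncard_coe_finset, card_blockWords]

theorem setOf_eqvGen_reverse (u : List ℕ) :
    {v | Relation.EqvGen AdjSwap1 u.reverse v} =
      List.reverse '' {v | Relation.EqvGen AdjSwap1 u v} := by
  ext v
  constructor
  · intro h
    exact ⟨v.reverse, by simpa using h.map _ fun _ _ h => h.reverse, v.reverse_reverse⟩
  · rintro ⟨w, hw, rfl⟩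
    exact hw.map _ fun _ _ h => h.reverse

/-- The equivalence class of the identity permutation `1 2 ⋯ n`, and that of its
reverse `n ⋯ 2 1`, under the relation `∼` generated by interchanging adjacent
entries differing by exactly one, both have exactly `F_{n+1}` elements
(the `(n+1)`-st Fibonacci number, with `F₁ = F₂ = 1`). -/
theorem stmt8 (n : ℕ) :
    Set.ncard {v : List ℕ | Relation.EqvGen AdjSwap1 (List.range' 1 n) v} =
        Nat.fib (n + 1) ∧
    Set.ncard {v : List ℕ | Relation.EqvGen AdjSwap1 (List.range' 1 n).reverse v} =
        Nat.fib (n + 1) := by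
  refine ⟨ncard_setOf_eqvGen_range' 1 n, ?_⟩
  rw [setOf_eqvGen_reverse, Set.ncard_image_of_injective _ List.reverse_injective]
  exact ncard_setOf_eqvGen_range' 1 n
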